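/- Let μ₀ be a probability measure on ℝ^d with bounded density p₀ and κ₀ := log∫exp(‖w‖²) p₀(w) dw < ∞, and let π be the Gibbs measure with density exp(-βF(w))/Λ, where F is nonnegative, satisfies F(w) ≤ (M/3)‖w‖² + B‖w‖ + A and F(w) ≥ (m/3)‖w‖² - (b/2)log 3 for all w. Then D(μ₀‖π) ≤ log‖p₀‖_∞ + (d/2)·log(3π/(mβ)) + β·((M/3)κ₀ + B·√κ₀ + A + (b/2)·log 3), where D denotes relative entropy (Kullback–Leibler divergence). -/

import Mathlib

/-!
Write `D(μ₀‖π) = ∫ p₀ log p₀ + β ∫ F p₀ + log Λ`. The entropy term is at most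
`log ‖p₀‖_∞`. The quadratic lower bound on `F` dominates `exp (-β F)` by a Gaussian,
which bounds `log Λ`. The quadratic upper bound on `F` reduces `∫ F p₀` to the moments
`∫ ‖w‖² p₀ ≤ κ₀` (Jensen for `exp`) and `∫ ‖w‖ p₀ ≤ √(∫ ‖w‖² p₀)` (Cauchy–Schwarz).
-/

open Real MeasureTheory

lemma neg_mul_log_le_mul_add_exp {x : ℝ} (hx : 0 ≤ x) (t : ℝ) :
    -(x * log x) ≤ x * t + exp (-t - 1) := by
  rcases hx.eq_or_lt with rfl | hx
  · simpa using (exp_pos _).le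
  have hlog := log_le_sub_one_of_pos (div_pos (exp_pos (-t - 1)) hx)
  rw [log_div (exp_pos _).ne' hx.ne', log_exp] at hlog
  have hscaled : -t - log x ≤ exp (-t - 1) / x := by linarith
  rw [le_div_iff₀ hx] at hscaled
  linarith

lemma mul_log_le_mul_log_of_le {x C : ℝ} (hx : 0 ≤ x) (hxC : x ≤ C) :
    x * log x ≤ x * log C := by
  rcases hx.eq_or_lt with rfl | hx
  · simp
  · exact mul_le_mul_of_nonneg_left (log_le_log hx hxC) hx.le

lemma mul_log_div_exp_div {x Λ : ℝ} (hx : 0 ≤ x) (hΛ : 0 < Λ) (s : ℝ) :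
    x * log (x / (exp s / Λ)) = x * log x - s * x + log Λ * x := by
  rcases hx.eq_or_lt with rfl | hx
  · simp
  rw [log_div hx.ne' (div_pos (exp_pos s) hΛ).ne', log_div (exp_pos s).ne' hΛ.ne', log_exp]
  ring

lemma exp_neg_mul_le_of_quadratic_le {a c β x r : ℝ} (hβ : 0 ≤ β)
    (hx : a * r ^ 2 - c ≤ x) :
    exp (-β * x) ≤ exp (β * c) * exp (-(β * a) * r ^ 2) := by
  rw [← exp_add]
  exact exp_le_exp.2 (by nlinarith)

section Density

variable {α : Type*} [MeasurableSpace α] {μ : Measure α} {p h : α → ℝ}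

lemma integral_mul_le_log_integral_exp_mul (hp0 : 0 ≤ p) (hp1 : ∫ x, p x ∂μ = 1)
    {g : α → ℝ} (hgp : Integrable (fun x => g x * p x) μ)
    (hegp : Integrable (fun x => exp (g x) * p x) μ) :
    ∫ x, g x * p x ∂μ ≤ log (∫ x, exp (g x) * p x ∂μ) := by
  have hpi : Integrable p μ := Integrable.of_integral_ne_zero (by simp [hp1])
  set I := ∫ x, exp (g x) * p x ∂μ
  have hI : 0 < I := by
    have hsupp : 0 < μ (Function.support p) :=
      (integral_pos_iff_support_of_nonneg hp0 hpi).mp (by simp [hp1])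
    have hsupp_eq : Function.support (fun x => exp (g x) * p x) = Function.support p := by
      ext x; simp [(exp_pos (g x)).ne']
    rwa [integral_pos_iff_support_of_nonneg (fun x => mul_nonneg (exp_pos _).le (hp0 x)) hegp,
      hsupp_eq]
  -- the tangent line of `exp` at `log I`
  have htangent : ∀ x, g x * p x ≤ (log I - 1) * p x + I⁻¹ * (exp (g x) * p x) := by
    intro x
    have hexp := add_one_le_exp (g x - log I)
    rw [exp_sub, exp_log hI, div_eq_inv_mul] at hexp
    linarith [mul_le_mul_of_nonneg_right hexp (hp0 x)]
  have hmajor : Integrable (fun x => (log I - 1) * p x + I⁻¹ * (exp (g x) * p x)) μ :=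
    (hpi.const_mul _).add (hegp.const_mul _)
  calc ∫ x, g x * p x ∂μ
      ≤ ∫ x, ((log I - 1) * p x + I⁻¹ * (exp (g x) * p x)) ∂μ :=
        integral_mono hgp hmajor htangent
    _ = log I := by
        rw [integral_add (hpi.const_mul _) (hegp.const_mul _), integral_const_mul,
          integral_const_mul, hp1, inv_mul_cancel₀ hI.ne']
        ring

lemma sq_integral_mul_le_integral_sq_mul (hp0 : 0 ≤ p) (hp1 : ∫ x, p x ∂μ = 1)
    (hhp : Integrable (fun x => h x * p x) μ) (hh2p : Integrable (fun x => h x ^ 2 * p x) μ) :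
    (∫ x, h x * p x ∂μ) ^ 2 ≤ ∫ x, h x ^ 2 * p x ∂μ := by
  have hpi : Integrable p μ := Integrable.of_integral_ne_zero (by simp [hp1])
  set a := ∫ x, h x * p x ∂μ
  have hamgm : ∀ x, 2 * a * (h x * p x) ≤ h x ^ 2 * p x + a ^ 2 * p x := fun x => by
    nlinarith [mul_nonneg (sq_nonneg (h x - a)) (hp0 x)]
  have hmajor : Integrable (fun x => h x ^ 2 * p x + a ^ 2 * p x) μ :=
    hh2p.add (hpi.const_mul _)
  have hint := integral_mono (hhp.const_mul (2 * a)) hmajor hamgm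
  rw [integral_const_mul, integral_add hh2p (hpi.const_mul _), integral_const_mul, hp1] at hint
  nlinarith

lemma integrable_sq_mul_of_integrable_exp_sq_mul (hp0 : 0 ≤ p) (hp : AEStronglyMeasurable p μ)
    (hh : AEStronglyMeasurable h μ) (he : Integrable (fun x => exp (h x ^ 2) * p x) μ) :
    Integrable (fun x => h x ^ 2 * p x) μ :=
  he.mono' ((hh.pow 2).mul hp) <| Filter.Eventually.of_forall fun x => by
    rw [norm_of_nonneg (mul_nonneg (sq_nonneg _) (hp0 x))]
    exact mul_le_mul_of_nonneg_right (by linarith [add_one_le_exp (h x ^ 2)]) (hp0 x)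

lemma integrable_mul_of_integrable_sq_mul (hp0 : 0 ≤ p) (hpi : Integrable p μ)
    (hh : AEStronglyMeasurable h μ) (hh2p : Integrable (fun x => h x ^ 2 * p x) μ) :
    Integrable (fun x => h x * p x) μ :=
  (hpi.add hh2p).mono' (hh.mul hpi.aestronglyMeasurable) <| Filter.Eventually.of_forall fun x => by
    have habs : |h x| ≤ 1 + h x ^ 2 := by nlinarith [sq_abs (h x), abs_nonneg (h x)]
    rw [norm_mul, norm_of_nonneg (hp0 x), Real.norm_eq_abs, Pi.add_apply]
    linarith [mul_le_mul_of_nonneg_right habs (hp0 x)]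

lemma integrable_mul_of_le_quadratic (hp0 : 0 ≤ p) (hpi : Integrable p μ) {F : α → ℝ}
    {a b c : ℝ} (hF : AEStronglyMeasurable F μ) (hF0 : 0 ≤ F)
    (hFle : ∀ x, F x ≤ a * h x ^ 2 + b * h x + c) (hhp : Integrable (fun x => h x * p x) μ)
    (hh2p : Integrable (fun x => h x ^ 2 * p x) μ) :
    Integrable (fun x => F x * p x) μ :=
  (((hh2p.const_mul a).add (hhp.const_mul b)).add (hpi.const_mul c)).mono'
    (hF.mul hpi.aestronglyMeasurable) <| Filter.Eventually.of_forall fun x => by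
      rw [norm_of_nonneg (mul_nonneg (hF0 x) (hp0 x)), Pi.add_apply, Pi.add_apply]
      linarith [mul_le_mul_of_nonneg_right (hFle x) (hp0 x)]

lemma integral_mul_le_of_le_quadratic (hp0 : 0 ≤ p) (hp1 : ∫ x, p x ∂μ = 1) {F : α → ℝ}
    {a b c : ℝ} (ha : 0 ≤ a) (hb : 0 ≤ b) (hFle : ∀ x, F x ≤ a * h x ^ 2 + b * h x + c)
    (hFp : Integrable (fun x => F x * p x) μ) (hhp : Integrable (fun x => h x * p x) μ)
    (hh2p : Integrable (fun x => h x ^ 2 * p x) μ)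
    (he : Integrable (fun x => exp (h x ^ 2) * p x) μ) :
    ∫ x, F x * p x ∂μ ≤
      a * log (∫ x, exp (h x ^ 2) * p x ∂μ) + b * √(log (∫ x, exp (h x ^ 2) * p x ∂μ)) + c := by
  have hpi : Integrable p μ := Integrable.of_integral_ne_zero (by simp [hp1])
  have hsecond := integral_mul_le_log_integral_exp_mul hp0 hp1 hh2p he
  have hfirst : ∫ x, h x * p x ∂μ ≤ √(log (∫ x, exp (h x ^ 2) * p x ∂μ)) :=
    (le_abs_self _).trans
      (abs_le_sqrt ((sq_integral_mul_le_integral_sq_mul hp0 hp1 hhp hh2p).trans hsecond))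
  have hmajor : Integrable (fun x => a * (h x ^ 2 * p x) + b * (h x * p x) + c * p x) μ :=
    ((hh2p.const_mul a).add (hhp.const_mul b)).add (hpi.const_mul c)
  calc ∫ x, F x * p x ∂μ
      ≤ ∫ x, (a * (h x ^ 2 * p x) + b * (h x * p x) + c * p x) ∂μ :=
        integral_mono hFp hmajor fun x => by
          linarith [mul_le_mul_of_nonneg_right (hFle x) (hp0 x)]
    _ = a * ∫ x, h x ^ 2 * p x ∂μ + b * ∫ x, h x * p x ∂μ + c := by
        rw [integral_add, integral_add (hh2p.const_mul a) (hhp.const_mul b), integral_const_mul,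
          integral_const_mul, integral_const_mul, hp1, mul_one]
        exacts [(hh2p.const_mul a).add (hhp.const_mul b), hpi.const_mul c]
    _ ≤ _ := by
        have := mul_le_mul_of_nonneg_left hsecond ha
        have := mul_le_mul_of_nonneg_left hfirst hb
        linarith

lemma integrable_mul_log_of_le (hp0 : 0 ≤ p) (hpi : Integrable p μ) {C : ℝ}
    (hpC : ∀ x, p x ≤ C) {V : α → ℝ} (hVp : Integrable (fun x => V x * p x) μ)
    (hV : Integrable (fun x => exp (-V x)) μ) :
    Integrable (fun x => p x * log (p x)) μ := by
  have hdom : Integrable (fun x => |log C| * p x + |V x * p x + exp (-V x - 1)|) μ := by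
    refine (hpi.const_mul _).add (hVp.add ?_).abs
    simpa [sub_eq_add_neg, exp_add] using hV.mul_const (exp (-1))
  refine hdom.mono' (continuous_mul_log.comp_aestronglyMeasurable hpi.aestronglyMeasurable)
    (Filter.Eventually.of_forall fun x => ?_)
  have hup := mul_log_le_mul_log_of_le (hp0 x) (hpC x)
  have hlow := neg_mul_log_le_mul_add_exp (hp0 x) (V x)
  have hlogC : p x * log C ≤ |log C| * p x := by
    rw [mul_comm]; exact mul_le_mul_of_nonneg_right (le_abs_self _) (hp0 x)
  rw [Real.norm_eq_abs, abs_le]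
  constructor <;>
    nlinarith [mul_nonneg (abs_nonneg (log C)) (hp0 x), le_abs_self (V x * p x + exp (-V x - 1)),
      abs_nonneg (V x * p x + exp (-V x - 1))]

lemma integral_mul_log_le_log (hp0 : 0 ≤ p) (hp1 : ∫ x, p x ∂μ = 1) {C : ℝ}
    (hpC : ∀ x, p x ≤ C) (hplogp : Integrable (fun x => p x * log (p x)) μ) :
    ∫ x, p x * log (p x) ∂μ ≤ log C := by
  have hpi : Integrable p μ := Integrable.of_integral_ne_zero (by simp [hp1])
  calc ∫ x, p x * log (p x) ∂μ ≤ ∫ x, p x * log C ∂μ :=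
        integral_mono hplogp (hpi.mul_const _) fun x => mul_log_le_mul_log_of_le (hp0 x) (hpC x)
    _ = log C := by rw [integral_mul_const, hp1, one_mul]

end Density

section Gaussian

variable {E : Type*} [NormedAddCommGroup E] [InnerProductSpace ℝ E] [FiniteDimensional ℝ E]
  [MeasurableSpace E] [BorelSpace E] {F : E → ℝ} {a c β : ℝ}

lemma integrable_exp_neg_mul_sq_norm {b : ℝ} (hb : 0 < b) :
    Integrable (fun w : E => exp (-b * ‖w‖ ^ 2)) :=
  Integrable.of_integral_ne_zero <| by
    rw [GaussianFourier.integral_rexp_neg_mul_sq_norm hb]; positivity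

lemma integrable_exp_neg_mul_of_quadratic_le (hβ : 0 < β) (ha : 0 < a)
    (hF : AEStronglyMeasurable F) (hlow : ∀ w, a * ‖w‖ ^ 2 - c ≤ F w) :
    Integrable (fun w => exp (-β * F w)) :=
  ((integrable_exp_neg_mul_sq_norm (mul_pos hβ ha)).const_mul (exp (β * c))).mono'
    (continuous_exp.comp_aestronglyMeasurable (hF.const_mul (-β)))
    (Filter.Eventually.of_forall fun w => by
      rw [norm_of_nonneg (exp_pos _).le]
      exact exp_neg_mul_le_of_quadratic_le hβ.le (hlow w))

lemma log_integral_exp_neg_mul_le_of_quadratic_le (hβ : 0 < β) (ha : 0 < a)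
    (hF : AEStronglyMeasurable F) (hlow : ∀ w, a * ‖w‖ ^ 2 - c ≤ F w) :
    log (∫ w, exp (-β * F w)) ≤ β * c + Module.finrank ℝ E / 2 * log (π / (β * a)) := by
  have hle :
      ∫ w, exp (-β * F w) ≤ exp (β * c) * (π / (β * a)) ^ (Module.finrank ℝ E / 2 : ℝ) := by
    rw [← GaussianFourier.integral_rexp_neg_mul_sq_norm (mul_pos hβ ha), ← integral_const_mul]
    exact integral_mono (integrable_exp_neg_mul_of_quadratic_le hβ ha hF hlow)
      ((integrable_exp_neg_mul_sq_norm (mul_pos hβ ha)).const_mul _)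
      fun w => exp_neg_mul_le_of_quadratic_le hβ.le (hlow w)
  calc log (∫ w, exp (-β * F w))
      ≤ log (exp (β * c) * (π / (β * a)) ^ (Module.finrank ℝ E / 2 : ℝ)) :=
        log_le_log (integral_exp_pos (integrable_exp_neg_mul_of_quadratic_le hβ ha hF hlow)) hle
    _ = _ := by
        have : 0 < π / (β * a) := by positivity
        rw [log_mul (exp_pos _).ne' (by positivity), log_exp, log_rpow this]

end Gaussian

theorem relative_entropy_initial_bound_general
    {d : ℕ} (p₀ F : EuclideanSpace ℝ (Fin d) → ℝ)
    (A B M m b β Λ Pinf κ₀ : ℝ)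
    (hB : 0 ≤ B) (hM : 0 < M) (hm : 0 < m)
    (hβ : 0 < β)
    (hp₀pos : ∀ w, 0 ≤ p₀ w)
    (hp₀prob : ∫ w : EuclideanSpace ℝ (Fin d), p₀ w = 1)
    (hp₀bdd : ∀ w, p₀ w ≤ Pinf)
    (hκ₀int : Integrable
      (fun w : EuclideanSpace ℝ (Fin d) => Real.exp (‖w‖ ^ 2) * p₀ w))
    (hκ₀ : κ₀ = Real.log
      (∫ w : EuclideanSpace ℝ (Fin d), Real.exp (‖w‖ ^ 2) * p₀ w))
    (hFmeas : Measurable F)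
    (hFnonneg : ∀ w, 0 ≤ F w)
    (hFupper : ∀ w : EuclideanSpace ℝ (Fin d),
      F w ≤ M / 3 * ‖w‖ ^ 2 + B * ‖w‖ + A)
    (hFlower : ∀ w : EuclideanSpace ℝ (Fin d),
      F w ≥ m / 3 * ‖w‖ ^ 2 - b / 2 * Real.log 3)
    (hΛ : Λ = ∫ w : EuclideanSpace ℝ (Fin d), Real.exp (-β * F w)) :
    (∫ w : EuclideanSpace ℝ (Fin d),
        p₀ w * Real.log (p₀ w / (Real.exp (-β * F w) / Λ))) ≤
      Real.log Pinf + (d : ℝ) / 2 * Real.log (3 * Real.pi / (m * β)) +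
        β * (M / 3 * κ₀ + B * Real.sqrt κ₀ + A + b / 2 * Real.log 3) := by
  have hp₀int : Integrable p₀ := Integrable.of_integral_ne_zero (by simp [hp₀prob])
  have hsq := integrable_sq_mul_of_integrable_exp_sq_mul hp₀pos hp₀int.aestronglyMeasurable
    continuous_norm.aestronglyMeasurable hκ₀int
  have hnorm := integrable_mul_of_integrable_sq_mul hp₀pos hp₀int
    continuous_norm.aestronglyMeasurable hsq
  have hFp₀ := integrable_mul_of_le_quadratic hp₀pos hp₀int hFmeas.aestronglyMeasurable
    hFnonneg hFupper hnorm hsq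
  have hplogp := integrable_mul_log_of_le hp₀pos hp₀int hp₀bdd hsq
    (by simpa using integrable_exp_neg_mul_sq_norm (E := EuclideanSpace ℝ (Fin d)) one_pos)
  have hentropy := integral_mul_log_le_log hp₀pos hp₀prob hp₀bdd hplogp
  have hpotential : ∫ w, F w * p₀ w ≤ M / 3 * κ₀ + B * √κ₀ + A := hκ₀ ▸
    integral_mul_le_of_le_quadratic hp₀pos hp₀prob (by positivity) hB hFupper hFp₀ hnorm hsq
      hκ₀int
  have hΛpos : 0 < Λ := hΛ ▸ integral_exp_pos
    (integrable_exp_neg_mul_of_quadratic_le hβ (by positivity) hFmeas.aestronglyMeasurable hFlower)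
  have hlogΛ : log Λ ≤ β * (b / 2 * log 3) + d / 2 * log (3 * π / (m * β)) := by
    have h := log_integral_exp_neg_mul_le_of_quadratic_le hβ (by positivity)
      hFmeas.aestronglyMeasurable hFlower
    rwa [← hΛ, finrank_euclideanSpace_fin, show π / (β * (m / 3)) = 3 * π / (m * β) by
      field_simp] at h
  have hdecomp : (fun w => p₀ w * log (p₀ w / (exp (-β * F w) / Λ))) =
      fun w => p₀ w * log (p₀ w) + β * (F w * p₀ w) + log Λ * p₀ w := funext fun w => by
    rw [mul_log_div_exp_div (hp₀pos w) hΛpos]; ring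
  have hentropy_potential : Integrable fun w => p₀ w * log (p₀ w) + β * (F w * p₀ w) :=
    hplogp.add (hFp₀.const_mul β)
  rw [hdecomp, integral_add hentropy_potential (hp₀int.const_mul _),
    integral_add hplogp (hFp₀.const_mul β), integral_const_mul, integral_const_mul, hp₀prob]
  have := mul_le_mul_of_nonneg_left hpotential hβ.le
  linarith

theorem relative_entropy_initial_bound
    {d : ℕ} (p₀ F : EuclideanSpace ℝ (Fin d) → ℝ)
    (A B M m b β Λ Pinf κ₀ : ℝ)
    (hA : 0 ≤ A) (hB : 0 ≤ B) (hM : 0 < M) (hm : 0 < m) (hb : 0 ≤ b)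
    (hβ : 0 < β)
    (hp₀meas : Measurable p₀)
    (hp₀pos : ∀ w, 0 ≤ p₀ w)
    (hp₀prob : ∫ w : EuclideanSpace ℝ (Fin d), p₀ w = 1)
    (hp₀bdd : ∀ w, p₀ w ≤ Pinf) (hPinf : 0 < Pinf)
    (hκ₀int : Integrable
      (fun w : EuclideanSpace ℝ (Fin d) => Real.exp (‖w‖ ^ 2) * p₀ w))
    (hκ₀ : κ₀ = Real.log
      (∫ w : EuclideanSpace ℝ (Fin d), Real.exp (‖w‖ ^ 2) * p₀ w))
    (hFmeas : Measurable F)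
    (hFnonneg : ∀ w, 0 ≤ F w)
    (hFupper : ∀ w : EuclideanSpace ℝ (Fin d),
      F w ≤ M / 3 * ‖w‖ ^ 2 + B * ‖w‖ + A)
    (hFlower : ∀ w : EuclideanSpace ℝ (Fin d),
      F w ≥ m / 3 * ‖w‖ ^ 2 - b / 2 * Real.log 3)
    (hΛ : Λ = ∫ w : EuclideanSpace ℝ (Fin d), Real.exp (-β * F w)) :
    (∫ w : EuclideanSpace ℝ (Fin d),
        p₀ w * Real.log (p₀ w / (Real.exp (-β * F w) / Λ))) ≤
      Real.log Pinf + (d : ℝ) / 2 * Real.log (3 * Real.pi / (m * β)) +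
        β * (M / 3 * κ₀ + B * Real.sqrt κ₀ + A + b / 2 * Real.log 3) :=
  relative_entropy_initial_bound_general p₀ F A B M m b β Λ Pinf κ₀ hB hM hm hβ hp₀pos hp₀prob
    hp₀bdd hκ₀int hκ₀ hFmeas hFnonneg hFupper hFlower hΛ
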